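/- Let K be a bounded self-adjoint linear operator on H satisfying the ill-posedness assumption with constant Q and the band structure assumption with bandwidth m, and suppose σ_j → 0 as j → ∞. Then K is a compact operator; in fact ‖K − K P_j‖ → 0 as j → ∞, so K is the operator-norm limit of the finite-rank operators K P_j. -/

import Mathlib

/-!
Write `f = P_j f + g`, where `g` has no coefficients of level `≤ j`. The upper ill-posedness
bound gives `⟪K g, g⟫ ≤ Q σ_{j+1} ‖f‖²`, and for a positive operator Cauchy–Schwarz for the form
`⟪K ·, ·⟫` gives `‖K g‖² ≤ ‖K‖ ⟪K g, g⟫`. Hence `‖K - K P_j‖ ≤ √(‖K‖ Q σ_{j+1}) → 0`, so `K` is a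
norm limit of the finite-rank operators `K P_j`.
-/

open MeasureTheory ProbabilityTheory Filter
open scoped RealInnerProductSpace BigOperators ENNReal NNReal

noncomputable section

/-- The approximation space `V_j`, the span of the basis vectors of level at most `j`. -/
def Vsub {ι H : Type*} [NormedAddCommGroup H] [InnerProductSpace ℝ H]
    (φ : ι → H) (lvl : ι → ℕ) (j : ℕ) : Submodule ℝ H :=
  Submodule.span ℝ (φ '' {k | lvl k ≤ j})

/-- The orthogonal projection `P_j` onto `V_j`, as a continuous linear map on `H`. -/
def Pclm {ι H : Type*} [NormedAddCommGroup H] [InnerProductSpace ℝ H]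
    (φ : ι → H) (lvl : ι → ℕ) (hfin : ∀ j, {k : ι | lvl k ≤ j}.Finite) (j : ℕ) :
    H →L[ℝ] H :=
  ∑ k ∈ (hfin j).toFinset, (innerSL ℝ (φ k)).smulRight (φ k)

theorem Pclm_mem {ι H : Type*} [NormedAddCommGroup H] [InnerProductSpace ℝ H]
    (φ : ι → H) (lvl : ι → ℕ) (hfin : ∀ j, {k : ι | lvl k ≤ j}.Finite) (j : ℕ) (f : H) :
    Pclm φ lvl hfin j f ∈ Vsub φ lvl j := by
  have h : Pclm φ lvl hfin j f = ∑ k ∈ (hfin j).toFinset, ⟪φ k, f⟫ • φ k := by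
    simp [Pclm, ContinuousLinearMap.sum_apply]
  rw [h]
  refine Submodule.sum_mem _ fun k hk => Submodule.smul_mem _ _ ?_
  exact Submodule.subset_span ⟨k, (hfin j).mem_toFinset.mp hk, rfl⟩

/-- The Galerkin projection `K_j := P_j K |_{V_j}` of an operator `K`, as a continuous
linear map from `V_j` to `V_j`. -/
def Kgal {ι H : Type*} [NormedAddCommGroup H] [InnerProductSpace ℝ H]
    (φ : ι → H) (lvl : ι → ℕ) (hfin : ∀ j, {k : ι | lvl k ≤ j}.Finite)
    (K : H →L[ℝ] H) (j : ℕ) : Vsub φ lvl j →L[ℝ] Vsub φ lvl j :=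
  ContinuousLinearMap.codRestrict
    ((Pclm φ lvl hfin j).comp (K.comp (Vsub φ lvl j).subtypeL))
    (Vsub φ lvl j) (fun _ => Pclm_mem φ lvl hfin j _)


theorem ContinuousLinearMap.isCompactOperator_of_finiteDimensional_range
    {𝕜 E F : Type*} [NontriviallyNormedField 𝕜] [ProperSpace 𝕜]
    [NormedAddCommGroup E] [NormedSpace 𝕜 E] [NormedAddCommGroup F] [NormedSpace 𝕜 F]
    (f : E →L[𝕜] F) [FiniteDimensional 𝕜 (LinearMap.range f.toLinearMap)] :
    IsCompactOperator f :=
  have := FiniteDimensional.proper 𝕜 (LinearMap.range f.toLinearMap)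
  (isCompactOperator_of_locallyCompactSpace_dom
    (f.toLinearMap.rangeRestrict.mkContinuous ‖f‖ fun x => f.le_opNorm x)).continuous_comp
    continuous_subtype_val

section PositiveOperator

variable {E : Type*} [NormedAddCommGroup E] [InnerProductSpace ℝ E] {T : E →L[ℝ] E}

theorem ContinuousLinearMap.IsPositive.inner_apply_sq_le (hT : T.IsPositive) (x y : E) :
    ⟪T x, y⟫ ^ 2 ≤ ⟪T x, x⟫ * ⟪T y, y⟫ := by
  have hquad : ∀ t : ℝ, 0 ≤ ⟪T y, y⟫ * (t * t) + 2 * ⟪T x, y⟫ * t + ⟪T x, x⟫ := by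
    intro t
    have hsymm : ⟪T y, x⟫ = ⟪T x, y⟫ := by
      rw [hT.inner_left_eq_inner_right, real_inner_comm]
    have hexpand : ⟪T (x + t • y), x + t • y⟫ =
        ⟪T y, y⟫ * (t * t) + 2 * ⟪T x, y⟫ * t + ⟪T x, x⟫ := by
      simp only [map_add, map_smul, inner_add_left, inner_add_right, real_inner_smul_left,
        real_inner_smul_right, hsymm]
      ring
    exact hexpand ▸ hT.inner_nonneg_left _
  have := discrim_le_zero hquad
  rw [discrim] at this
  nlinarith

theorem ContinuousLinearMap.IsPositive.norm_apply_sq_le (hT : T.IsPositive) (x : E) :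
    ‖T x‖ ^ 2 ≤ ‖T‖ * ⟪T x, x⟫ := by
  rcases (norm_nonneg (T x)).eq_or_lt with h0 | hpos
  · rw [← h0]
    simpa using mul_nonneg (norm_nonneg T) (hT.inner_nonneg_left x)
  have hcs := hT.inner_apply_sq_le x (T x)
  rw [real_inner_self_eq_norm_sq] at hcs
  have hTTx : ⟪T (T x), T x⟫ ≤ ‖T‖ * ‖T x‖ ^ 2 :=
    calc ⟪T (T x), T x⟫ ≤ ‖T (T x)‖ * ‖T x‖ := real_inner_le_norm _ _
      _ ≤ ‖T‖ * ‖T x‖ * ‖T x‖ := by gcongr; exact T.le_opNorm _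
      _ = ‖T‖ * ‖T x‖ ^ 2 := by ring
  have : ‖T x‖ ^ 2 * ‖T x‖ ^ 2 ≤ ‖T‖ * ⟪T x, x⟫ * ‖T x‖ ^ 2 := by
    nlinarith [mul_le_mul_of_nonneg_left hTTx (hT.inner_nonneg_left x)]
  exact le_of_mul_le_mul_right this (by positivity)

end PositiveOperator

section Projection

variable {ι H : Type*} [NormedAddCommGroup H] [InnerProductSpace ℝ H] {φ : ι → H} {lvl : ι → ℕ}
  (hfin : ∀ j, {k : ι | lvl k ≤ j}.Finite)

theorem Pclm_apply (j : ℕ) (f : H) :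
    Pclm φ lvl hfin j f = ∑ k ∈ (hfin j).toFinset, ⟪φ k, f⟫ • φ k := by
  simp [Pclm]

theorem inner_sub_Pclm_apply (hφ : Orthonormal ℝ φ) (j : ℕ) (f : H) (k : ι) :
    ⟪f - Pclm φ lvl hfin j f, φ k⟫ = if lvl k ≤ j then 0 else ⟪f, φ k⟫ := by
  split_ifs with hk
  · rw [inner_sub_left, Pclm_apply, hφ.inner_left_sum _ ((hfin j).mem_toFinset.mpr hk),
      real_inner_comm, conj_trivial, sub_self]
  · rw [inner_sub_left, Pclm_apply, sum_inner, Finset.sum_eq_zero, sub_zero]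
    intro l hl
    have hlk : l ≠ k := fun h => hk (h ▸ (hfin j).mem_toFinset.mp hl)
    rw [real_inner_smul_left, hφ.inner_eq_zero hlk, mul_zero]

variable (φ) in
theorem finiteDimensional_range_comp_Pclm {F : Type*} [NormedAddCommGroup F] [NormedSpace ℝ F]
    (T : H →L[ℝ] F) (j : ℕ) :
    FiniteDimensional ℝ (LinearMap.range (T.comp (Pclm φ lvl hfin j)).toLinearMap) := by
  have : FiniteDimensional ℝ (Vsub φ lvl j) :=
    FiniteDimensional.span_of_finite ℝ ((hfin j).image φ)
  refine Submodule.finiteDimensional_of_le (S₂ := (Vsub φ lvl j).map T.toLinearMap) ?_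
  rintro _ ⟨f, rfl⟩
  exact ⟨_, Pclm_mem φ lvl hfin j f, rfl⟩

theorem HilbertBasis.tsum_mul_inner_sub_Pclm_sq_le (b : HilbertBasis ι ℝ H) {σ : ℕ → ℝ}
    (hσ : ∀ n, 0 ≤ σ n) (hσanti : Antitone σ) (j : ℕ) (f : H) :
    ∑' k, σ (lvl k) * ⟪f - Pclm b lvl hfin j f, b k⟫ ^ 2 ≤ σ (j + 1) * ‖f‖ ^ 2 := by
  have hparseval : HasSum (fun k => ⟪f, b k⟫ ^ 2) (‖f‖ ^ 2) := by
    simpa [← real_inner_self_eq_norm_sq, real_inner_comm f, sq] using b.hasSum_inner_mul_inner f f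
  have hterm : ∀ k,
      σ (lvl k) * ⟪f - Pclm b lvl hfin j f, b k⟫ ^ 2 ≤ σ (j + 1) * ⟪f, b k⟫ ^ 2 := by
    intro k
    rw [inner_sub_Pclm_apply hfin b.orthonormal]
    split_ifs with hk
    · simpa using mul_nonneg (hσ (j + 1)) (sq_nonneg ⟪f, b k⟫)
    · exact mul_le_mul_of_nonneg_right (hσanti (by omega)) (sq_nonneg _)
  have hsummable := hparseval.summable.mul_left (σ (j + 1))
  calc ∑' k, σ (lvl k) * ⟪f - Pclm b lvl hfin j f, b k⟫ ^ 2
      ≤ ∑' k, σ (j + 1) * ⟪f, b k⟫ ^ 2 :=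
        (hsummable.of_nonneg_of_le (fun k => mul_nonneg (hσ _) (sq_nonneg _)) hterm).tsum_le_tsum
          hterm hsummable
    _ = σ (j + 1) * ‖f‖ ^ 2 := by rw [tsum_mul_left, hparseval.tsum_eq]

theorem HilbertBasis.norm_sub_comp_Pclm_le (b : HilbertBasis ι ℝ H) {σ : ℕ → ℝ}
    (hσ : ∀ n, 0 ≤ σ n) (hσanti : Antitone σ) {K : H →L[ℝ] H} (hK : K.IsPositive)
    {Q : ℝ} (hQ : 0 ≤ Q)
    (hupper : ∀ f, ⟪K f, f⟫ ≤ Q * ∑' k, σ (lvl k) * ⟪f, b k⟫ ^ 2) (j : ℕ) :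
    ‖K - K.comp (Pclm b lvl hfin j)‖ ≤ √(‖K‖ * Q * σ (j + 1)) := by
  refine ContinuousLinearMap.opNorm_le_bound _ (Real.sqrt_nonneg _) fun f => ?_
  set g := f - Pclm b lvl hfin j f
  have hsq : ‖K g‖ ^ 2 ≤ ‖K‖ * Q * σ (j + 1) * ‖f‖ ^ 2 :=
    calc ‖K g‖ ^ 2 ≤ ‖K‖ * ⟪K g, g⟫ := hK.norm_apply_sq_le g
      _ ≤ ‖K‖ * (Q * (σ (j + 1) * ‖f‖ ^ 2)) := by
        gcongr
        exact (hupper g).trans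
          (by gcongr; exact b.tsum_mul_inner_sub_Pclm_sq_le hfin hσ hσanti j f)
      _ = ‖K‖ * Q * σ (j + 1) * ‖f‖ ^ 2 := by ring
  rw [sub_apply, ContinuousLinearMap.comp_apply, ← map_sub,
    ← Real.sqrt_sq (norm_nonneg f), ← Real.sqrt_mul' _ (sq_nonneg _)]
  exact Real.le_sqrt_of_sq_le hsq

end Projection

theorem stmt2_general {ι H : Type*} [NormedAddCommGroup H] [InnerProductSpace ℝ H]
    [CompleteSpace H]
    (φ : HilbertBasis ι ℝ H) (lvl : ι → ℕ)
    (hfin : ∀ j, {k : ι | lvl k ≤ j}.Finite)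
    (σ : ℕ → ℝ) (hσpos : ∀ n, 0 < σ n) (hσanti : ∀ i n, i ≤ n → σ n ≤ σ i)
    (hσ0 : Tendsto σ atTop (nhds 0))
    (K : H →L[ℝ] H) (hsa : ∀ x y : H, ⟪K x, y⟫ = ⟪x, K y⟫)
    (Q : ℝ) (hQ : 0 < Q)
    (hill : ∀ f : H,
      Q⁻¹ * (∑' k, σ (lvl k) * ⟪f, φ k⟫ ^ 2) ≤ ⟪K f, f⟫ ∧
      ⟪K f, f⟫ ≤ Q * (∑' k, σ (lvl k) * ⟪f, φ k⟫ ^ 2)) :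
    IsCompactOperator (⇑K) ∧
    (∀ j, FiniteDimensional ℝ
      (LinearMap.range ((K.comp (Pclm (⇑φ) lvl hfin j)).toLinearMap))) ∧
    Tendsto (fun j => ‖K - K.comp (Pclm (⇑φ) lvl hfin j)‖) atTop (nhds 0) := by
  have hσ n : 0 ≤ σ n := (hσpos n).le
  have hK : K.IsPositive := ⟨hsa, fun f => (mul_nonneg (inv_nonneg.mpr hQ.le)
    (tsum_nonneg fun k => mul_nonneg (hσ _) (sq_nonneg _))).trans (hill f).1⟩
  have hbound : Tendsto (fun j => √(‖K‖ * Q * σ (j + 1))) atTop (nhds 0) := by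
    simpa using ((hσ0.comp (tendsto_add_atTop_nat 1)).const_mul (‖K‖ * Q)).sqrt
  have hlim : Tendsto (fun j => ‖K - K.comp (Pclm (⇑φ) lvl hfin j)‖) atTop (nhds 0) :=
    squeeze_zero (fun _ => norm_nonneg _)
      (φ.norm_sub_comp_Pclm_le hfin hσ hσanti hK hQ.le (fun f => (hill f).2)) hbound
  have hfd j := finiteDimensional_range_comp_Pclm φ hfin K j
  have hKlim : Tendsto (fun j => K.comp (Pclm (⇑φ) lvl hfin j)) atTop (nhds K) :=
    tendsto_iff_norm_sub_tendsto_zero.mpr (by simpa [norm_sub_rev] using hlim)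
  exact ⟨isCompactOperator_of_tendsto hKlim (.of_forall fun j =>
    (K.comp _).isCompactOperator_of_finiteDimensional_range), hfd, hlim⟩

/-- a bounded self-adjoint operator satisfying the ill-posedness assumption
(with `σ_j → 0`) and the band structure assumption is compact; indeed `‖K - K P_j‖ → 0`,
so `K` is the operator-norm limit of the finite-rank operators `K P_j`. -/
theorem stmt2 {ι H : Type*} [NormedAddCommGroup H] [InnerProductSpace ℝ H]
    [CompleteSpace H] [Countable ι]
    (φ : HilbertBasis ι ℝ H) (lvl : ι → ℕ)
    (hfin : ∀ j, {k : ι | lvl k ≤ j}.Finite)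
    (σ : ℕ → ℝ) (hσpos : ∀ n, 0 < σ n) (hσanti : ∀ i n, i ≤ n → σ n ≤ σ i)
    (hσ0 : Tendsto σ atTop (nhds 0))
    (K : H →L[ℝ] H) (hsa : ∀ x y : H, ⟪K x, y⟫ = ⟪x, K y⟫)
    (Q : ℝ) (hQ : 0 < Q)
    (hill : ∀ f : H,
      Q⁻¹ * (∑' k, σ (lvl k) * ⟪f, φ k⟫ ^ 2) ≤ ⟪K f, f⟫ ∧
      ⟪K f, f⟫ ≤ Q * (∑' k, σ (lvl k) * ⟪f, φ k⟫ ^ 2))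
    (m : ℕ)
    (hband : ∀ k l : ι, (m : ℤ) < |(lvl l : ℤ) - (lvl k : ℤ)| → ⟪K (φ l), φ k⟫ = 0) :
    IsCompactOperator (⇑K) ∧
    (∀ j, FiniteDimensional ℝ
      (LinearMap.range ((K.comp (Pclm (⇑φ) lvl hfin j)).toLinearMap))) ∧
    Tendsto (fun j => ‖K - K.comp (Pclm (⇑φ) lvl hfin j)‖) atTop (nhds 0) :=
  stmt2_general φ lvl hfin σ hσpos hσanti hσ0 K hsa Q hQ hill
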